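/- Let (Ω, d) be a metric space. The map x ↦ M{x}, sending a point to the function t ↦ {x}^t (open ball of radius t, with value {x} at t = 0), is injective, and the interaction time τ(M{x}, M{y}) = d(x, y) makes the image an isometric copy of (Ω, d). -/

import Mathlib

open Metric

/-- `M{x} : [0,∞) → 2^Ω`, with `(M{x})(0) = {x}` and `(M{x})(t)` the open ball. -/
noncomputable def Msing {Ω : Type*} [MetricSpace Ω] (x : Ω) : ℝ → Set Ω :=
  fun t => if t = 0 then {x} else Metric.ball x t

/-- `t_{αβ}` for `α = M{x}`, `β = M{y}` (`inf ∅ = 0` by Lean's `sInf` convention). -/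
noncomputable def tab {Ω : Type*} [MetricSpace Ω] (x y : Ω) : ℝ :=
  sInf {t : ℝ | 0 ≤ t ∧ ∀ ε > 0, (Msing x t ∩ Metric.ball y ε).Nonempty}

/-- The interaction time `τ(M{x}, M{y}) = max{t_{αβ}, t_{βα}}`. -/
noncomputable def tau {Ω : Type*} [MetricSpace Ω] (x y : Ω) : ℝ :=
  max (tab x y) (tab y x)

/-
The infimum defining `t_{M{x} M{y}}` is taken over a set squeezed between `(d(x,y), ∞)` and
`[d(x,y), ∞)`: above `d(x,y)` the ball `M{x}(t)` contains `y` itself, while a point of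
`M{x}(t)` within `ε` of `y` forces `d(x,y) ≤ t + ε`. Hence `t_{M{x} M{y}} = d(x,y)`, and `τ`
is the symmetrisation of `d`. Injectivity is read off at `t = 0`.
-/

theorem csInf_eq_of_Ioi_subset_of_subset_Ici {α : Type*} [ConditionallyCompleteLinearOrder α]
    [NoMaxOrder α] [DenselyOrdered α] {S : Set α} {a : α}
    (hIoi : Set.Ioi a ⊆ S) (hIci : S ⊆ Set.Ici a) : sInf S = a := by
  have hS : S.Nonempty := Set.nonempty_Ioi.mono hIoi
  apply le_antisymm
  · calc sInf S ≤ sInf (Set.Ioi a) := csInf_le_csInf ⟨a, hIci⟩ Set.nonempty_Ioi hIoi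
      _ = a := csInf_Ioi
  · calc a = sInf (Set.Ici a) := csInf_Ici.symm
      _ ≤ sInf S := csInf_le_csInf bddBelow_Ici hS hIci

section Msing

variable {Ω : Type*} [MetricSpace Ω]

@[simp]
theorem Msing_zero (x : Ω) : Msing x 0 = {x} := if_pos rfl

theorem Msing_of_ne_zero (x : Ω) {t : ℝ} (ht : t ≠ 0) : Msing x t = ball x t := if_neg ht

theorem Msing_subset_closedBall (x : Ω) {t : ℝ} (ht : 0 ≤ t) : Msing x t ⊆ closedBall x t := by
  rcases ht.eq_or_lt with rfl | ht
  · simp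
  · rw [Msing_of_ne_zero x ht.ne']
    exact ball_subset_closedBall

theorem Msing_injective : Function.Injective (Msing (Ω := Ω)) := fun x y h => by
  simpa using congrFun h 0

theorem dist_le_of_forall_Msing_inter_ball_nonempty {x y : Ω} {t : ℝ} (ht : 0 ≤ t)
    (h : ∀ ε > 0, (Msing x t ∩ ball y ε).Nonempty) : dist x y ≤ t := by
  refine le_of_forall_pos_lt_add fun ε hε => ?_
  obtain ⟨z, hzx, hzy⟩ := h ε hε
  calc dist x y ≤ dist x z + dist z y := dist_triangle x z y
    _ < t + ε := add_lt_add_of_le_of_lt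
        (by simpa [dist_comm] using Msing_subset_closedBall x ht hzx) hzy

theorem tab_eq_dist (x y : Ω) : tab x y = dist x y := by
  refine csInf_eq_of_Ioi_subset_of_subset_Ici (fun t ht => ?_) fun t ⟨ht, h⟩ =>
    dist_le_of_forall_Msing_inter_ball_nonempty ht h
  have ht : 0 < t := dist_nonneg.trans_lt ht
  refine ⟨ht.le, fun ε hε => ⟨y, ?_, mem_ball_self hε⟩⟩
  rwa [Msing_of_ne_zero x ht.ne', mem_ball, dist_comm]

theorem tau_eq_dist (x y : Ω) : tau x y = dist x y := by
  rw [tau, tab_eq_dist, tab_eq_dist, dist_comm y x, max_self]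

end Msing

/-- The map `x ↦ M{x}` is injective, and the interaction time turns its image
into an isometric copy of `(Ω, d)`: `τ(M{x}, M{y}) = d(x, y)`. -/
theorem Msing_injective_and_isometric {Ω : Type*} [MetricSpace Ω] :
    Function.Injective (Msing (Ω := Ω)) ∧ ∀ x y : Ω, tau x y = dist x y :=
  ⟨Msing_injective, tau_eq_dist⟩
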